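/- For every finite simple graph G = (V,E) and every positive integer k, there exists an edge colouring ω:E→{1,…,k} such that for every vertex v ∈ V and all colours i, j ∈ {1,…,k}, |d_{E_i}(v) − d_{E_j}(v)| ≤ 2; that is, the k-discrepancy 𝒟_k(G) is at most 2. -/

import Mathlib

/-!
Take a colouring minimising the energy `∑ᵥ ∑_c d_c(v)²`. If `d_i(v) ≥ d_j(v) + 3` at some
vertex `v`, follow an `i`/`j`-alternating trail from `v`, starting with an `i`-edge, for as long
as possible, and swap `i` and `j` on its edges. Interior vertices of the trail keep their colour
degrees; `v` moves one or two edges from `i` to `j`, which strictly lowers its energy; and the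
trail can only get stuck at a vertex where the colour it needs is used up, so swapping does not
raise the energy there. This contradicts minimality.
-/

open Finset Equiv

section Recolour

variable {α β : Type*} [DecidableEq α]

def recolourOn (S : Finset α) (π : Perm β) (f : α → β) : α → β :=
  fun e => if e ∈ S then π (f e) else f e

theorem card_filter_recolourOn_add [DecidableEq β] (S T : Finset α) (π : Perm β) (f : α → β)
    (c : β) :
    #{e ∈ T | recolourOn S π f e = c} + #{e ∈ T ∩ S | f e = c} =
      #{e ∈ T | f e = c} + #{e ∈ T ∩ S | f e = π.symm c} := by
  simp only [← filter_mem_eq_inter, filter_filter, card_filter, ← sum_add_distrib]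
  refine sum_congr rfl fun e _ => ?_
  by_cases he : e ∈ S <;> simp [recolourOn, he, eq_symm_apply, add_comm]

theorem card_filter_inter_insert {S : Finset α} {e : α} (he : e ∉ S) (T : Finset α)
    (p : α → Prop) [DecidablePred p] :
    #{a ∈ T ∩ insert e S | p a} =
      #{a ∈ T ∩ S | p a} + if e ∈ T ∧ p e then 1 else 0 := by
  by_cases heT : e ∈ T
  · rw [inter_insert_of_mem heT, filter_insert]
    split_ifs with hp <;> simp_all
  · rw [inter_insert_of_notMem heT]
    simp [heT]

end Recolour

namespace SimpleGraph

variable {V β : Type*} [Fintype V] [DecidableEq V] (G : SimpleGraph V) [DecidableRel G.Adj]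
  [DecidableEq β]

def colourDegree (ω : Sym2 V → β) (c : β) (x : V) : ℕ :=
  #{e ∈ G.incidenceFinset x | ω e = c}

def imbalance (S : Finset (Sym2 V)) (ω : Sym2 V → β) (i j : β) (x : V) : ℤ :=
  #{e ∈ G.incidenceFinset x ∩ S | ω e = i} - #{e ∈ G.incidenceFinset x ∩ S | ω e = j}

def localColourEnergy [Fintype β] (ω : Sym2 V → β) (x : V) : ℤ :=
  ∑ c, (G.colourDegree ω c x : ℤ) ^ 2

def colourEnergy [Fintype β] (ω : Sym2 V → β) : ℤ :=
  ∑ x, G.localColourEnergy ω x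

theorem card_filter_inter_le_colourDegree (S : Finset (Sym2 V)) (ω : Sym2 V → β) (c : β)
    (x : V) : #{e ∈ G.incidenceFinset x ∩ S | ω e = c} ≤ G.colourDegree ω c x :=
  card_le_card (filter_subset_filter _ inter_subset_left)

variable {G}

theorem exists_adj_of_mem_incidenceFinset {w : V} {e : Sym2 V} (he : e ∈ G.incidenceFinset w) :
    ∃ w', G.Adj w w' ∧ e = s(w, w') := by
  rw [mem_incidenceFinset] at he
  obtain ⟨w', rfl⟩ := Sym2.mem_iff_exists.1 he.2
  exact ⟨w', (G.mem_incidenceSet w w').1 he, rfl⟩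

variable {S : Finset (Sym2 V)} {ω : Sym2 V → β} {i j : β}

theorem card_filter_inter_eq_colourDegree {c : β} {x : V}
    (hS : {e ∈ G.incidenceFinset x | ω e = c} ⊆ S) :
    #{e ∈ G.incidenceFinset x ∩ S | ω e = c} = G.colourDegree ω c x := by
  rw [colourDegree, ← filter_inter, inter_eq_left.2 hS]

theorem colourDegree_le_of_imbalance_eq_zero {x : V} (h0 : G.imbalance S ω i j x = 0)
    (hS : {e ∈ G.incidenceFinset x | ω e = i} ⊆ S) :
    G.colourDegree ω i x ≤ G.colourDegree ω j x := by
  have := card_filter_inter_eq_colourDegree hS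
  have := G.card_filter_inter_le_colourDegree S ω j x
  rw [imbalance] at h0
  omega

theorem imbalance_swap : G.imbalance S ω j i = -G.imbalance S ω i j := by
  ext x
  simp [imbalance]

theorem imbalance_insert {w w' : V} (hij : i ≠ j) (hadj : G.Adj w w') (he : s(w, w') ∉ S)
    (hi : ω s(w, w') = i) :
    G.imbalance (insert s(w, w') S) ω i j =
      G.imbalance S ω i j + Pi.single w 1 + Pi.single w' 1 := by
  ext x
  simp only [imbalance, Pi.add_apply, card_filter_inter_insert he, mem_incidenceFinset,
    mk'_mem_incidenceSet_iff, hi, hadj, Pi.single_apply]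
  have := G.ne_of_adj hadj
  split_ifs <;> simp_all <;> omega

variable [Fintype β]

theorem localColourEnergy_recolourOn_swap (hij : i ≠ j) (x : V) :
    G.localColourEnergy (recolourOn S (swap i j) ω) x = G.localColourEnergy ω x +
      2 * G.imbalance S ω i j x *
        (G.imbalance S ω i j x + G.colourDegree ω j x - G.colourDegree ω i x) := by
  have key (c : β) : (G.colourDegree (recolourOn S (swap i j) ω) c x : ℤ) =
      G.colourDegree ω c x - #{e ∈ G.incidenceFinset x ∩ S | ω e = c} +
        #{e ∈ G.incidenceFinset x ∩ S | ω e = swap i j c} := by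
    have := card_filter_recolourOn_add S (G.incidenceFinset x) (swap i j) ω c
    rw [symm_swap] at this
    unfold colourDegree
    omega
  rw [← sub_eq_iff_eq_add', localColourEnergy, localColourEnergy, ← sum_sub_distrib,
    Fintype.sum_eq_add i j hij]
  · rw [key, key, swap_apply_left, swap_apply_right, imbalance]
    ring
  · rintro c ⟨hci, hcj⟩
    rw [key, swap_apply_of_ne_of_ne hci hcj]
    ring

theorem localColourEnergy_recolourOn_swap_le {x : V} (hij : i ≠ j)
    (hpos : 0 < G.imbalance S ω i j x → {e ∈ G.incidenceFinset x | ω e = j} ⊆ S)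
    (hneg : G.imbalance S ω i j x < 0 → {e ∈ G.incidenceFinset x | ω e = i} ⊆ S) :
    G.localColourEnergy (recolourOn S (swap i j) ω) x ≤ G.localColourEnergy ω x := by
  rw [localColourEnergy_recolourOn_swap hij]
  have hi := G.card_filter_inter_le_colourDegree S ω i x
  have hj := G.card_filter_inter_le_colourDegree S ω j x
  rcases lt_trichotomy (G.imbalance S ω i j x) 0 with ha | ha | ha
  · have := card_filter_inter_eq_colourDegree (hneg ha)
    rw [imbalance] at ha ⊢
    nlinarith
  · simp [ha]
  · have := card_filter_inter_eq_colourDegree (hpos ha)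
    rw [imbalance] at ha ⊢
    nlinarith

theorem localColourEnergy_recolourOn_swap_lt {x : V} (hij : i ≠ j)
    (hpos : 0 < G.imbalance S ω i j x) (hle : G.imbalance S ω i j x ≤ 2)
    (hx : G.colourDegree ω j x + 3 ≤ G.colourDegree ω i x) :
    G.localColourEnergy (recolourOn S (swap i j) ω) x < G.localColourEnergy ω x := by
  rw [localColourEnergy_recolourOn_swap hij]
  have : (G.colourDegree ω j x : ℤ) + 3 ≤ G.colourDegree ω i x := by exact_mod_cast hx
  nlinarith

theorem colourEnergy_recolourOn_swap_lt {v : V}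
    (hv : G.colourDegree ω j v + 3 ≤ G.colourDegree ω i v)
    (hpos : 0 < G.imbalance S ω i j v) (hle : G.imbalance S ω i j v ≤ 2)
    (hsat : ∀ x ≠ v,
      (0 < G.imbalance S ω i j x → {e ∈ G.incidenceFinset x | ω e = j} ⊆ S) ∧
      (G.imbalance S ω i j x < 0 → {e ∈ G.incidenceFinset x | ω e = i} ⊆ S)) :
    G.colourEnergy (recolourOn S (swap i j) ω) < G.colourEnergy ω := by
  have hij : i ≠ j := by rintro rfl; omega
  have hlt := localColourEnergy_recolourOn_swap_lt hij hpos hle hv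
  refine sum_lt_sum (fun x _ => ?_) ⟨v, mem_univ v, hlt⟩
  obtain rfl | hxv := eq_or_ne x v
  · exact hlt.le
  · exact localColourEnergy_recolourOn_swap_le hij (hsat x hxv).1 (hsat x hxv).2

theorem colourEnergy_recolourOn_swap_lt_of_imbalance_eq_sub {v w : V}
    (hv : G.colourDegree ω j v + 3 ≤ G.colourDegree ω i v) (hwv : w ≠ v)
    (hS : G.imbalance S ω i j = Pi.single v 1 - Pi.single w 1)
    (hw : {e ∈ G.incidenceFinset w | ω e = i} ⊆ S) :
    G.colourEnergy (recolourOn S (swap i j) ω) < G.colourEnergy ω := by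
  refine colourEnergy_recolourOn_swap_lt hv (by simp [hS, hwv.symm]) (by simp [hS, hwv.symm])
    fun x hxv => ?_
  simp only [hS, Pi.sub_apply, Pi.single_apply, if_neg hxv]
  split_ifs with hxw
  · subst hxw
    exact ⟨by norm_num, fun _ => hw⟩
  · simp

theorem colourEnergy_recolourOn_swap_lt_of_imbalance_eq_add {v w : V}
    (hv : G.colourDegree ω j v + 3 ≤ G.colourDegree ω i v)
    (hS : G.imbalance S ω i j = Pi.single v 1 + Pi.single w 1)
    (hw : {e ∈ G.incidenceFinset w | ω e = j} ⊆ S) :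
    G.colourEnergy (recolourOn S (swap i j) ω) < G.colourEnergy ω := by
  refine colourEnergy_recolourOn_swap_lt hv ?_ ?_ fun x hxv => ?_
  · simp only [hS, Pi.add_apply, Pi.single_eq_same, Pi.single_apply]
    split_ifs <;> norm_num
  · simp only [hS, Pi.add_apply, Pi.single_eq_same, Pi.single_apply]
    split_ifs <;> norm_num
  · simp only [hS, Pi.add_apply, Pi.single_apply, if_neg hxv, zero_add]
    split_ifs with hxw
    · subst hxw
      exact ⟨fun _ => hw, by norm_num⟩
    · simp

/- A set `S` with `imbalance S = δ_v - δ_w` stands for an alternating trail from `v` to `w` of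
even length; a largest one cannot be extended by an `i`-edge followed by a `j`-edge. -/
theorem exists_colourEnergy_lt {v : V} (hv : G.colourDegree ω j v + 3 ≤ G.colourDegree ω i v) :
    ∃ ω' : Sym2 V → β, G.colourEnergy ω' < G.colourEnergy ω := by
  classical
  have hij : i ≠ j := by rintro rfl; omega
  obtain ⟨S, hS, hmax⟩ := exists_max_image
    {S | ∃ w, G.imbalance S ω i j = Pi.single v 1 - Pi.single w 1} card
    ⟨∅, mem_filter.2 ⟨mem_univ _, v, by ext x; simp [imbalance]⟩⟩
  obtain ⟨w, hSw⟩ := (mem_filter.1 hS).2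
  by_cases hwi : {e ∈ G.incidenceFinset w | ω e = i} ⊆ S
  · have hwv : w ≠ v := by
      rintro rfl
      have := colourDegree_le_of_imbalance_eq_zero (by rw [hSw]; simp) hwi
      omega
    exact ⟨_, colourEnergy_recolourOn_swap_lt_of_imbalance_eq_sub hv hwv hSw hwi⟩
  obtain ⟨e, he, heS⟩ := not_subset.1 hwi
  rw [mem_filter] at he
  obtain ⟨w', hadj, rfl⟩ := exists_adj_of_mem_incidenceFinset he.1
  have hS' := imbalance_insert hij hadj heS he.2
  rw [hSw, sub_add_cancel] at hS'
  by_cases hw'j : {e ∈ G.incidenceFinset w' | ω e = j} ⊆ insert s(w, w') S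
  · exact ⟨_, colourEnergy_recolourOn_swap_lt_of_imbalance_eq_add hv hS' hw'j⟩
  obtain ⟨e', he', he'S⟩ := not_subset.1 hw'j
  rw [mem_filter] at he'
  obtain ⟨w'', hadj', rfl⟩ := exists_adj_of_mem_incidenceFinset he'.1
  have hS'' := imbalance_insert hij.symm hadj' he'S he'.2
  rw [imbalance_swap (i := i) (j := j), imbalance_swap (i := i) (j := j), hS'] at hS''
  have := hmax _ (mem_filter.2 ⟨mem_univ _, w'', by linear_combination -hS''⟩)
  rw [card_insert_of_notMem he'S, card_insert_of_notMem heS] at this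
  omega

variable (G) in
theorem exists_colourDegree_le_add_two [Nonempty β] :
    ∃ ω : Sym2 V → β, ∀ v i j, G.colourDegree ω i v ≤ G.colourDegree ω j v + 2 := by
  obtain ⟨ω, hω⟩ := Finite.exists_min (G.colourEnergy (β := β))
  refine ⟨ω, fun v i j => ?_⟩
  by_contra! h
  obtain ⟨ω', hω'⟩ :=
    exists_colourEnergy_lt (G := G) (ω := ω) (v := v) (i := i) (j := j) (by omega)
  exact (hω ω').not_gt hω'

end SimpleGraph

/-- For every finite simple graph `G` and every positive integer `k`,
there is an edge colouring with `k` colours such that at every vertex the numbers of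
incident edges in any two colours differ by at most `2`; i.e. `𝒟_k(G) ≤ 2`. -/
theorem k_discrepancy_le_two
    {V : Type*} [Fintype V] [DecidableEq V] (G : SimpleGraph V) [DecidableRel G.Adj]
    (k : ℕ) (hk : 0 < k) :
    ∃ ω : Sym2 V → Fin k,
      ∀ (v : V) (i j : Fin k),
        |((G.incidenceSet v ∩ {e | ω e = i}).ncard : ℤ) -
          ((G.incidenceSet v ∩ {e | ω e = j}).ncard : ℤ)| ≤ 2 := by
  have : Nonempty (Fin k) := Fin.pos_iff_nonempty.1 hk
  obtain ⟨ω, hω⟩ := G.exists_colourDegree_le_add_two (β := Fin k)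
  refine ⟨ω, fun v i j => ?_⟩
  have hdeg (c : Fin k) : (G.incidenceSet v ∩ {e | ω e = c}).ncard = G.colourDegree ω c v := by
    rw [SimpleGraph.colourDegree, ← Set.ncard_coe_finset, coe_filter]
    congr 1
    ext e
    simp
  rw [hdeg, hdeg, abs_sub_le_iff]
  have := hω v i j
  have := hω v j i
  omega
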